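/- Bound for |v|^β against the full kinetic Gaussian: for β ∈ (0,1], σ > 0, 0 ≤ s < t, and z=(x,v), y=(ξ,ν) ∈ ℝ^{2d}, one has ‖z‖_B^β · exp(-(1/2)(y-e^{(t-s)B}z)^T C_σ(t-s)^{-1}(y-e^{(t-s)B}z)) ≤ C_β(|ν| + (|ξ| + (t-s)|ν|)^{1/3} + ((βσ^d + β^{1/3}σ^{d/3})(t-s))^{1/2})^β for a constant C_β depending only on β. -/

import Mathlib

open Matrix Real

/-- The `2d×2d` block matrix `B = [[0, I],[0, 0]]`. -/
def Bmat (d : ℕ) : Matrix (Fin d ⊕ Fin d) (Fin d ⊕ Fin d) ℝ :=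
  Matrix.fromBlocks 0 1 0 0

/-- The matrix exponential `e^{τB} = I + τB`. -/
noncomputable def expB (d : ℕ) (τ : ℝ) : Matrix (Fin d ⊕ Fin d) (Fin d ⊕ Fin d) ℝ :=
  1 + τ • Bmat d

/-- The inverse covariance matrix
`C_σ(t)⁻¹ = σ^{-d}·[[12/t³·I, -6/t²·I],[-6/t²·I, 4/t·I]]`. -/
noncomputable def CsigmaInv (d : ℕ) (σ t : ℝ) : Matrix (Fin d ⊕ Fin d) (Fin d ⊕ Fin d) ℝ :=
  (σ ^ d)⁻¹ •
    Matrix.fromBlocks ((12 / t ^ 3) • 1) ((-6 / t ^ 2) • 1) ((-6 / t ^ 2) • 1) ((4 / t) • 1)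

/-- The spatial norm `‖(x,v)‖_B = Σᵢ|xᵢ|^{1/3} + Σᵢ|vᵢ|`. -/
noncomputable def normB {d : ℕ} (x v : Fin d → ℝ) : ℝ :=
  (∑ i, |x i| ^ ((1 : ℝ) / 3)) + ∑ i, |v i|

/-- Euclidean norm of a vector in `ℝ^d`. -/
noncomputable def euclNorm {d : ℕ} (u : Fin d → ℝ) : ℝ := Real.sqrt (∑ i, (u i) ^ 2)

/- ### Auxiliary lemmas -/

lemma aux_exp {c s : ℝ} (hc : 0 < c) (hs : 0 ≤ s) : s ^ c * Real.exp (-s) ≤ c ^ c := by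
  rcases hs.eq_or_lt with rfl | hs'
  · rw [Real.zero_rpow hc.ne']
    simpa using (Real.rpow_pos_of_pos hc c).le
  · rw [Real.rpow_def_of_pos hs', Real.rpow_def_of_pos hc, ← Real.exp_add, Real.exp_le_exp]
    have hlog : Real.log (s / c) ≤ s / c - 1 := Real.log_le_sub_one_of_pos (div_pos hs' hc)
    rw [Real.log_div hs'.ne' hc.ne'] at hlog
    have h2 := mul_le_mul_of_nonneg_left hlog hc.le
    have h3 : c * (s / c) = s := by field_simp
    nlinarith

lemma gauss_bound {p a r : ℝ} (hp : 0 < p) (ha : 0 < a) (hr : 0 ≤ r) :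
    r ^ p * Real.exp (-(r ^ 2 / (2 * a))) ≤ (p * a) ^ (p / 2) := by
  set s := r ^ 2 / (2 * a) with hsdef
  have hs : 0 ≤ s := by positivity
  have hr2 : r ^ p = (2 * a) ^ (p / 2) * s ^ (p / 2) := by
    rw [← Real.mul_rpow (by positivity) hs]
    have h : 2 * a * s = r ^ 2 := by rw [hsdef]; field_simp
    rw [h, ← Real.rpow_natCast r 2, ← Real.rpow_mul hr]
    norm_num
    rw [mul_div_cancel₀]
    norm_num
  rw [hr2, mul_assoc]
  calc (2 * a) ^ (p/2) * (s ^ (p/2) * Real.exp (-s))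
      ≤ (2 * a) ^ (p/2) * (p/2) ^ (p/2) :=
        mul_le_mul_of_nonneg_left (aux_exp (by positivity) hs) (by positivity)
    _ = (p * a) ^ (p/2) := by
        rw [← Real.mul_rpow (by positivity) (by positivity)]
        congr 1; ring

lemma rpow_subadd {x y p : ℝ} (hx : 0 ≤ x) (hy : 0 ≤ y) (hp : 0 ≤ p) (hp1 : p ≤ 1) :
    (x + y) ^ p ≤ x ^ p + y ^ p := by
  lift x to NNReal using hx
  lift y to NNReal using hy
  have := NNReal.rpow_add_le_add_rpow x y hp hp1
  exact_mod_cast this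

lemma rpow_subadd5 {a b c e f p : ℝ} (ha : 0 ≤ a) (hb : 0 ≤ b) (hc : 0 ≤ c) (he : 0 ≤ e)
    (hf : 0 ≤ f) (hp : 0 ≤ p) (hp1 : p ≤ 1) :
    (a + b + c + e + f) ^ p ≤ a ^ p + b ^ p + c ^ p + e ^ p + f ^ p := by
  calc (a + b + c + e + f) ^ p
      ≤ (a + b + c + e) ^ p + f ^ p := rpow_subadd (by positivity) hf hp hp1
    _ ≤ ((a + b + c) ^ p + e ^ p) + f ^ p :=
        add_le_add_left (rpow_subadd (by positivity) he hp hp1) _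
    _ ≤ (((a + b) ^ p + c ^ p) + e ^ p) + f ^ p :=
        add_le_add_left (add_le_add_left (rpow_subadd (by positivity) hc hp hp1) _) _
    _ ≤ (((a ^ p + b ^ p) + c ^ p) + e ^ p) + f ^ p :=
        add_le_add_left (add_le_add_left (add_le_add_left (rpow_subadd ha hb hp hp1) _) _) _

lemma euclNorm_nonneg {d : ℕ} (u : Fin d → ℝ) : 0 ≤ euclNorm u := Real.sqrt_nonneg _

lemma euclNorm_sq {d : ℕ} (u : Fin d → ℝ) : euclNorm u ^ 2 = ∑ i, u i ^ 2 :=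
  Real.sq_sqrt (Finset.sum_nonneg fun _ _ => sq_nonneg _)

lemma abs_le_euclNorm {d : ℕ} (u : Fin d → ℝ) (i : Fin d) : |u i| ≤ euclNorm u := by
  rw [← Real.sqrt_sq_eq_abs]
  exact Real.sqrt_le_sqrt (Finset.single_le_sum (f := fun j => u j ^ 2)
    (fun j _ => sq_nonneg _) (Finset.mem_univ i))

lemma euclNorm_eq_norm {d : ℕ} (u : Fin d → ℝ) :
    euclNorm u = ‖(WithLp.equiv 2 (Fin d → ℝ)).symm u‖ := by
  rw [EuclideanSpace.norm_eq]
  simp [euclNorm, sq_abs]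

lemma euclNorm_add_le {d : ℕ} (u w : Fin d → ℝ) :
    euclNorm (u + w) ≤ euclNorm u + euclNorm w := by
  rw [euclNorm_eq_norm, euclNorm_eq_norm, euclNorm_eq_norm]
  exact norm_add_le _ _

lemma euclNorm_smul {d : ℕ} (c : ℝ) (u : Fin d → ℝ) :
    euclNorm (c • u) = |c| * euclNorm u := by
  rw [euclNorm_eq_norm, euclNorm_eq_norm]
  rw [show (WithLp.equiv 2 (Fin d → ℝ)).symm (c • u)
      = c • (WithLp.equiv 2 (Fin d → ℝ)).symm u from rfl]
  rw [norm_smul]; simp [Real.norm_eq_abs]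

set_option maxHeartbeats 1000000 in
theorem stmt19 (d : ℕ) (β : ℝ) (hβ0 : 0 < β) (hβ1 : β ≤ 1) :
    ∃ Cβ : ℝ, 0 < Cβ ∧ ∀ σ s t : ℝ, 0 < σ → 0 ≤ s → s < t →
      ∀ x v ξ ν : Fin d → ℝ,
        normB x v ^ β *
          Real.exp (-(1 / 2) *
            ((Sum.elim ξ ν - expB d (t - s) *ᵥ Sum.elim x v) ⬝ᵥ
              CsigmaInv d σ (t - s) *ᵥ (Sum.elim ξ ν - expB d (t - s) *ᵥ Sum.elim x v))) ≤
        Cβ * (euclNorm ν + (euclNorm ξ + (t - s) * euclNorm ν) ^ ((1 : ℝ) / 3) +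
            Real.sqrt ((β * σ ^ d + β ^ ((1 : ℝ) / 3) * σ ^ ((d : ℝ) / 3)) * (t - s))) ^ β := by
  refine ⟨5 * ((d : ℝ) + 1) ^ β, by positivity, ?_⟩
  intro σ s t hσ hs hst x v ξ ν
  set τ := t - s with hτdef
  have hτ : 0 < τ := sub_pos.mpr hst
  have hσd : (0:ℝ) < σ ^ d := pow_pos hσ d
  set W : Fin d → ℝ := fun i => ξ i - (x i + τ * v i) with hWdef
  set u : Fin d → ℝ := fun i => ν i - v i with hudef
  set m : Fin d → ℝ := fun i => W i - (τ/2) * u i with hmdef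
  clear_value m
  clear_value W u
  clear_value τ
  -- Step 1: the vector
  have hvec : Sum.elim ξ ν - expB d τ *ᵥ Sum.elim x v = Sum.elim W u := by
    funext j
    cases j with
    | inl i =>
        simp [hWdef, expB, Bmat, Matrix.add_mulVec, Matrix.smul_mulVec,
          Matrix.fromBlocks_mulVec, Matrix.one_mulVec, Matrix.zero_mulVec]
    | inr i =>
        simp [hudef, expB, Bmat, Matrix.add_mulVec, Matrix.smul_mulVec,
          Matrix.fromBlocks_mulVec, Matrix.one_mulVec, Matrix.zero_mulVec]
  -- Step 2: the quadratic form
  have hquad : Sum.elim W u ⬝ᵥ CsigmaInv d σ τ *ᵥ Sum.elim W u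
      = (σ ^ d)⁻¹ * ((12 / τ ^ 3) * (∑ i, m i ^ 2) + (1 / τ) * (∑ i, u i ^ 2)) := by
    rw [CsigmaInv, Matrix.smul_mulVec, Matrix.fromBlocks_mulVec]
    simp only [Sum.elim_comp_inl, Sum.elim_comp_inr, Matrix.smul_mulVec,
      Matrix.one_mulVec, dotProduct_smul]
    rw [sumElim_dotProduct_sumElim]
    simp only [dotProduct, Pi.add_apply, Pi.smul_apply, smul_eq_mul]
    rw [← Finset.sum_add_distrib]
    simp only [hmdef, smul_eq_mul, Finset.mul_sum, ← Finset.sum_add_distrib]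
    refine Finset.sum_congr rfl fun i _ => ?_
    field_simp
    ring
  set EM := euclNorm m with hEMdef
  set EU := euclNorm u with hEUdef
  have hEM0 : 0 ≤ EM := euclNorm_nonneg m
  have hEU0 : 0 ≤ EU := euclNorm_nonneg u
  set A1 := EM ^ 2 / (2 * (σ ^ d * τ ^ 3 / 12)) with hA1def
  set A2 := EU ^ 2 / (2 * (σ ^ d * τ)) with hA2def
  have hA1 : 0 ≤ A1 := by rw [hA1def]; positivity
  have hA2 : 0 ≤ A2 := by rw [hA2def]; positivity
  have hexpeq : Real.exp (-(1 / 2) *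
      ((σ ^ d)⁻¹ * ((12 / τ ^ 3) * (∑ i, m i ^ 2) + (1 / τ) * (∑ i, u i ^ 2))))
      = Real.exp (-(A1 + A2)) := by
    congr 1
    rw [← euclNorm_sq m, ← euclNorm_sq u, ← hEMdef, ← hEUdef, hA1def, hA2def]
    field_simp
  -- norms
  set N := euclNorm ν with hNdef
  set Xi := euclNorm ξ with hXidef
  have hN0 : 0 ≤ N := euclNorm_nonneg ν
  have hXi0 : 0 ≤ Xi := euclNorm_nonneg ξ
  set G := Xi + τ * N with hGdef
  have hG0 : 0 ≤ G := by rw [hGdef]; positivity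
  set S := Real.sqrt ((β * σ ^ d + β ^ ((1 : ℝ) / 3) * σ ^ ((d : ℝ) / 3)) * τ) with hSdef
  have hS0 : 0 ≤ S := Real.sqrt_nonneg _
  set R := N + G ^ ((1 : ℝ) / 3) + S with hRdef
  have hG13 : 0 ≤ G ^ ((1:ℝ)/3) := Real.rpow_nonneg hG0 _
  have hR0 : 0 ≤ R := by rw [hRdef]; positivity
  -- bound on euclNorm v
  have hEVle : euclNorm v ≤ N + EU := by
    have h1 : v = ν + (-1 : ℝ) • u := by
      funext i; simp [hudef]
    calc euclNorm v = euclNorm (ν + (-1:ℝ) • u) := by rw [← h1]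
      _ ≤ euclNorm ν + euclNorm ((-1:ℝ) • u) := euclNorm_add_le _ _
      _ = N + EU := by rw [euclNorm_smul]; norm_num [hNdef, hEUdef]
  -- bound on euclNorm x
  have hEXle : euclNorm x ≤ G + τ * EU + EM := by
    have h1 : x = (ξ + (-τ) • ν) + ((τ/2) • u + (-1:ℝ) • m) := by
      funext i
      simp only [Pi.add_apply, Pi.smul_apply, smul_eq_mul, hmdef, hWdef, hudef]
      ring
    calc euclNorm x = euclNorm ((ξ + (-τ) • ν) + ((τ/2) • u + (-1:ℝ) • m)) := by rw [← h1]
      _ ≤ euclNorm (ξ + (-τ) • ν) + euclNorm ((τ/2) • u + (-1:ℝ) • m) := euclNorm_add_le _ _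
      _ ≤ (euclNorm ξ + euclNorm ((-τ) • ν)) + (euclNorm ((τ/2) • u) + euclNorm ((-1:ℝ) • m)) :=
          add_le_add (euclNorm_add_le _ _) (euclNorm_add_le _ _)
      _ = (Xi + τ * N) + ((τ/2) * EU + EM) := by
          rw [euclNorm_smul, euclNorm_smul, euclNorm_smul]
          rw [abs_neg, abs_neg, abs_one, abs_of_pos hτ,
            abs_of_pos (by positivity : (0:ℝ) < τ/2)]
          ring
      _ ≤ G + τ * EU + EM := by
          rw [hGdef]
          have : (τ/2) * EU ≤ τ * EU :=
            mul_le_mul_of_nonneg_right (by linarith) hEU0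
          linarith
  -- the five term bound on normB
  have hnB0 : 0 ≤ normB x v := by
    unfold normB
    have h1 : 0 ≤ ∑ i, |x i| ^ ((1:ℝ)/3) :=
      Finset.sum_nonneg fun i _ => Real.rpow_nonneg (abs_nonneg _) _
    have h2 : 0 ≤ ∑ i, |v i| := Finset.sum_nonneg fun i _ => abs_nonneg _
    linarith
  have hnormB : normB x v ≤ ((d:ℝ)+1) * (euclNorm x ^ ((1:ℝ)/3) + euclNorm v) := by
    unfold normB
    have h1 : ∑ i, |x i| ^ ((1:ℝ)/3) ≤ (d:ℝ) * euclNorm x ^ ((1:ℝ)/3) := by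
      calc ∑ i, |x i| ^ ((1:ℝ)/3) ≤ ∑ _i : Fin d, euclNorm x ^ ((1:ℝ)/3) :=
            Finset.sum_le_sum fun i _ =>
              Real.rpow_le_rpow (abs_nonneg _) (abs_le_euclNorm x i) (by norm_num)
        _ = (d:ℝ) * euclNorm x ^ ((1:ℝ)/3) := by
            rw [Finset.sum_const, Finset.card_univ, Fintype.card_fin, nsmul_eq_mul]
    have h2 : ∑ i, |v i| ≤ (d:ℝ) * euclNorm v := by
      calc ∑ i, |v i| ≤ ∑ _i : Fin d, euclNorm v :=
            Finset.sum_le_sum fun i _ => abs_le_euclNorm v i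
        _ = (d:ℝ) * euclNorm v := by
            rw [Finset.sum_const, Finset.card_univ, Fintype.card_fin, nsmul_eq_mul]
    have h3 : 0 ≤ euclNorm x ^ ((1:ℝ)/3) + euclNorm v := by
      have := Real.rpow_nonneg (euclNorm_nonneg x) ((1:ℝ)/3)
      have := euclNorm_nonneg v
      linarith
    have h4 : (d:ℝ) * (euclNorm x ^ ((1:ℝ)/3) + euclNorm v)
        ≤ ((d:ℝ)+1) * (euclNorm x ^ ((1:ℝ)/3) + euclNorm v) :=
      mul_le_mul_of_nonneg_right (by linarith) h3
    have h5 : (d:ℝ) * (euclNorm x ^ ((1:ℝ)/3) + euclNorm v)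
        = (d:ℝ) * euclNorm x ^ ((1:ℝ)/3) + (d:ℝ) * euclNorm v := by ring
    linarith
  have hX13 : euclNorm x ^ ((1:ℝ)/3) ≤ G ^ ((1:ℝ)/3) + (τ*EU) ^ ((1:ℝ)/3) + EM ^ ((1:ℝ)/3) := by
    calc euclNorm x ^ ((1:ℝ)/3) ≤ (G + τ*EU + EM) ^ ((1:ℝ)/3) :=
          Real.rpow_le_rpow (euclNorm_nonneg x) hEXle (by norm_num)
      _ ≤ (G + τ*EU) ^ ((1:ℝ)/3) + EM ^ ((1:ℝ)/3) :=
          rpow_subadd (by positivity) hEM0 (by norm_num) (by norm_num)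
      _ ≤ (G ^ ((1:ℝ)/3) + (τ*EU) ^ ((1:ℝ)/3)) + EM ^ ((1:ℝ)/3) :=
          add_le_add_left (rpow_subadd hG0 (by positivity) (by norm_num) (by norm_num)) _
  -- combine
  have hT5 : normB x v ≤ ((d:ℝ)+1) *
      (G ^ ((1:ℝ)/3) + (τ*EU) ^ ((1:ℝ)/3) + EM ^ ((1:ℝ)/3) + N + EU) := by
    have h := hnormB
    have h2 : euclNorm x ^ ((1:ℝ)/3) + euclNorm v ≤
        G ^ ((1:ℝ)/3) + (τ*EU) ^ ((1:ℝ)/3) + EM ^ ((1:ℝ)/3) + N + EU := by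
      have := hX13; have := hEVle; linarith
    calc normB x v ≤ ((d:ℝ)+1) * (euclNorm x ^ ((1:ℝ)/3) + euclNorm v) := h
      _ ≤ _ := by
          apply mul_le_mul_of_nonneg_left h2 (by positivity)
  -- power bound
  have htEU0 : 0 ≤ (τ*EU) ^ ((1:ℝ)/3) := Real.rpow_nonneg (by positivity) _
  have hEM13 : 0 ≤ EM ^ ((1:ℝ)/3) := Real.rpow_nonneg hEM0 _
  have hpow : normB x v ^ β ≤ ((d:ℝ)+1) ^ β *
      ((G ^ ((1:ℝ)/3)) ^ β + ((τ*EU) ^ ((1:ℝ)/3)) ^ β + (EM ^ ((1:ℝ)/3)) ^ β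
        + N ^ β + EU ^ β) := by
    calc normB x v ^ β
        ≤ (((d:ℝ)+1) * (G ^ ((1:ℝ)/3) + (τ*EU) ^ ((1:ℝ)/3) + EM ^ ((1:ℝ)/3) + N + EU)) ^ β :=
          Real.rpow_le_rpow hnB0 hT5 hβ0.le
      _ = ((d:ℝ)+1) ^ β *
          (G ^ ((1:ℝ)/3) + (τ*EU) ^ ((1:ℝ)/3) + EM ^ ((1:ℝ)/3) + N + EU) ^ β := by
          rw [Real.mul_rpow (by positivity) (by positivity)]
      _ ≤ _ := by
          apply mul_le_mul_of_nonneg_left _ (by positivity)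
          exact rpow_subadd5 hG13 htEU0 hEM13 hN0 hEU0 hβ0.le hβ1
  -- the S^β lower bounds
  have hS2 : S ^ β = ((β * σ ^ d + β ^ ((1:ℝ)/3) * σ ^ ((d:ℝ)/3)) * τ) ^ (β/2) := by
    rw [hSdef, Real.sqrt_eq_rpow, ← Real.rpow_mul (by positivity)]
    congr 1; ring
  have hkey6 : (β * σ ^ d * τ ^ 3) ^ (β/6) ≤ S ^ β := by
    have h1 : (β * σ ^ d * τ ^ 3) ^ (β/6)
        = ((β * σ ^ d * τ ^ 3) ^ ((1:ℝ)/3)) ^ (β/2) := by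
      rw [← Real.rpow_mul (by positivity)]
      congr 1; ring
    have h2 : (β * σ ^ d * τ ^ 3) ^ ((1:ℝ)/3)
        = β ^ ((1:ℝ)/3) * σ ^ ((d:ℝ)/3) * τ := by
      rw [Real.mul_rpow (by positivity) (by positivity),
        Real.mul_rpow (by positivity) (by positivity)]
      congr 1
      · congr 1
        rw [← Real.rpow_natCast σ d, ← Real.rpow_mul hσ.le]
        congr 1; ring
      · rw [← Real.rpow_natCast τ 3, ← Real.rpow_mul hτ.le]
        norm_num
    rw [h1, h2, hS2]
    apply Real.rpow_le_rpow (by positivity) _ (by positivity)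
    apply mul_le_mul_of_nonneg_right _ hτ.le
    have : 0 ≤ β * σ ^ d := by positivity
    linarith
  have hSR : S ≤ R := by rw [hRdef]; linarith
  have hSRb : S ^ β ≤ R ^ β := Real.rpow_le_rpow hS0 hSR hβ0.le
  -- exponential bounds
  have hE0 : (0:ℝ) ≤ Real.exp (-(A1 + A2)) := (Real.exp_pos _).le
  have hEone : Real.exp (-(A1 + A2)) ≤ 1 := by
    calc Real.exp (-(A1 + A2)) ≤ Real.exp 0 := Real.exp_le_exp.mpr (by linarith)
      _ = 1 := Real.exp_zero
  have hEA1 : Real.exp (-(A1 + A2)) ≤ Real.exp (-A1) := Real.exp_le_exp.mpr (by linarith)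
  have hEA2 : Real.exp (-(A1 + A2)) ≤ Real.exp (-A2) := Real.exp_le_exp.mpr (by linarith)
  -- piece 1 : G^{1/3}
  have hp1 : (G ^ ((1:ℝ)/3)) ^ β * Real.exp (-(A1 + A2)) ≤ R ^ β := by
    have h : G ^ ((1:ℝ)/3) ≤ R := by rw [hRdef]; linarith
    calc (G ^ ((1:ℝ)/3)) ^ β * Real.exp (-(A1 + A2))
        ≤ (G ^ ((1:ℝ)/3)) ^ β * 1 :=
          mul_le_mul_of_nonneg_left hEone (Real.rpow_nonneg hG13 _)
      _ = (G ^ ((1:ℝ)/3)) ^ β := mul_one _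
      _ ≤ R ^ β := Real.rpow_le_rpow hG13 h hβ0.le
  -- piece 4 : N
  have hp4 : N ^ β * Real.exp (-(A1 + A2)) ≤ R ^ β := by
    have h : N ≤ R := by rw [hRdef]; linarith
    calc N ^ β * Real.exp (-(A1 + A2)) ≤ N ^ β * 1 :=
          mul_le_mul_of_nonneg_left hEone (Real.rpow_nonneg hN0 _)
      _ = N ^ β := mul_one _
      _ ≤ R ^ β := Real.rpow_le_rpow hN0 h hβ0.le
  -- piece 5 : EU
  have hp5 : EU ^ β * Real.exp (-(A1 + A2)) ≤ R ^ β := by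
    have hg : EU ^ β * Real.exp (-A2) ≤ (β * (σ ^ d * τ)) ^ (β/2) := by
      have := gauss_bound (p := β) (a := σ ^ d * τ) hβ0 (by positivity) hEU0
      rwa [hA2def]
    have hle : (β * (σ ^ d * τ)) ^ (β/2) ≤ S ^ β := by
      rw [hS2]
      apply Real.rpow_le_rpow (by positivity) _ (by positivity)
      have h0 : 0 ≤ β ^ ((1:ℝ)/3) * σ ^ ((d:ℝ)/3) := by positivity
      have h1 : β * (σ ^ d * τ) = (β * σ ^ d) * τ := by ring
      rw [h1]
      exact mul_le_mul_of_nonneg_right (by linarith) hτ.le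
    calc EU ^ β * Real.exp (-(A1 + A2)) ≤ EU ^ β * Real.exp (-A2) :=
          mul_le_mul_of_nonneg_left hEA2 (Real.rpow_nonneg hEU0 _)
      _ ≤ (β * (σ ^ d * τ)) ^ (β/2) := hg
      _ ≤ S ^ β := hle
      _ ≤ R ^ β := hSRb
  -- piece 2 : (τ EU)^{1/3}
  have hp2 : ((τ*EU) ^ ((1:ℝ)/3)) ^ β * Real.exp (-(A1 + A2)) ≤ R ^ β := by
    have ht2 : ((τ*EU) ^ ((1:ℝ)/3)) ^ β = τ ^ (β/3) * EU ^ (β/3) := by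
      rw [← Real.rpow_mul (by positivity), show (1:ℝ)/3*β = β/3 by ring,
        Real.mul_rpow hτ.le hEU0]
    have hg : EU ^ (β/3) * Real.exp (-A2) ≤ ((β/3) * (σ ^ d * τ)) ^ ((β/3)/2) := by
      have := gauss_bound (p := β/3) (a := σ ^ d * τ) (by positivity) (by positivity) hEU0
      rwa [hA2def]
    have hcomb : τ ^ (β/3) * ((β/3) * (σ ^ d * τ)) ^ ((β/3)/2)
        ≤ (β * σ ^ d * τ ^ 3) ^ (β/6) := by
      have hτ2 : τ ^ (β/3) = ((τ:ℝ) ^ (2:ℕ)) ^ (β/6) := by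
        rw [← Real.rpow_natCast τ 2, ← Real.rpow_mul hτ.le]
        congr 1; push_cast; ring
      have hexp : ((β/3) * (σ ^ d * τ)) ^ ((β/3)/2)
          = ((β/3) * (σ ^ d * τ)) ^ (β/6) := by congr 1; ring
      rw [hτ2, hexp, ← Real.mul_rpow (by positivity) (by positivity)]
      apply Real.rpow_le_rpow (by positivity) _ (by positivity)
      have hX : (0:ℝ) ≤ σ ^ d * τ ^ 3 := by positivity
      calc (τ:ℝ) ^ (2:ℕ) * ((β/3) * (σ ^ d * τ)) = (β/3) * (σ ^ d * τ ^ 3) := by ring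
        _ ≤ β * (σ ^ d * τ ^ 3) := mul_le_mul_of_nonneg_right (by linarith) hX
        _ = β * σ ^ d * τ ^ 3 := by ring
    calc ((τ*EU) ^ ((1:ℝ)/3)) ^ β * Real.exp (-(A1 + A2))
        ≤ ((τ*EU) ^ ((1:ℝ)/3)) ^ β * Real.exp (-A2) :=
          mul_le_mul_of_nonneg_left hEA2 (Real.rpow_nonneg htEU0 _)
      _ = τ ^ (β/3) * (EU ^ (β/3) * Real.exp (-A2)) := by rw [ht2]; ring
      _ ≤ τ ^ (β/3) * ((β/3) * (σ ^ d * τ)) ^ ((β/3)/2) :=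
          mul_le_mul_of_nonneg_left hg (Real.rpow_nonneg hτ.le _)
      _ ≤ (β * σ ^ d * τ ^ 3) ^ (β/6) := hcomb
      _ ≤ S ^ β := hkey6
      _ ≤ R ^ β := hSRb
  -- piece 3 : EM^{1/3}
  have hp3 : (EM ^ ((1:ℝ)/3)) ^ β * Real.exp (-(A1 + A2)) ≤ R ^ β := by
    have ht3 : (EM ^ ((1:ℝ)/3)) ^ β = EM ^ (β/3) := by
      rw [← Real.rpow_mul hEM0]; congr 1; ring
    have hg : EM ^ (β/3) * Real.exp (-A1) ≤ ((β/3) * (σ ^ d * τ ^ 3 / 12)) ^ ((β/3)/2) := by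
      have := gauss_bound (p := β/3) (a := σ ^ d * τ ^ 3 / 12) (by positivity)
        (by positivity) hEM0
      rwa [hA1def]
    have hcomb : ((β/3) * (σ ^ d * τ ^ 3 / 12)) ^ ((β/3)/2)
        ≤ (β * σ ^ d * τ ^ 3) ^ (β/6) := by
      have hexp : ((β/3) * (σ ^ d * τ ^ 3 / 12)) ^ ((β/3)/2)
          = ((β/3) * (σ ^ d * τ ^ 3 / 12)) ^ (β/6) := by congr 1; ring
      rw [hexp]
      apply Real.rpow_le_rpow (by positivity) _ (by positivity)
      have hX : (0:ℝ) ≤ σ ^ d * τ ^ 3 := by positivity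
      calc (β/3) * (σ ^ d * τ ^ 3 / 12) = (β/36) * (σ ^ d * τ ^ 3) := by ring
        _ ≤ β * (σ ^ d * τ ^ 3) := mul_le_mul_of_nonneg_right (by linarith) hX
        _ = β * σ ^ d * τ ^ 3 := by ring
    calc (EM ^ ((1:ℝ)/3)) ^ β * Real.exp (-(A1 + A2))
        ≤ (EM ^ ((1:ℝ)/3)) ^ β * Real.exp (-A1) :=
          mul_le_mul_of_nonneg_left hEA1 (Real.rpow_nonneg hEM13 _)
      _ = EM ^ (β/3) * Real.exp (-A1) := by rw [ht3]
      _ ≤ ((β/3) * (σ ^ d * τ ^ 3 / 12)) ^ ((β/3)/2) := hg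
      _ ≤ (β * σ ^ d * τ ^ 3) ^ (β/6) := hcomb
      _ ≤ S ^ β := hkey6
      _ ≤ R ^ β := hSRb
  -- final assembly
  rw [hvec, hquad, hexpeq]
  calc normB x v ^ β * Real.exp (-(A1 + A2))
      ≤ (((d:ℝ)+1) ^ β *
          ((G ^ ((1:ℝ)/3)) ^ β + ((τ*EU) ^ ((1:ℝ)/3)) ^ β + (EM ^ ((1:ℝ)/3)) ^ β
            + N ^ β + EU ^ β)) * Real.exp (-(A1 + A2)) :=
        mul_le_mul_of_nonneg_right hpow hE0
    _ = ((d:ℝ)+1) ^ β *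
        ((G ^ ((1:ℝ)/3)) ^ β * Real.exp (-(A1 + A2))
          + ((τ*EU) ^ ((1:ℝ)/3)) ^ β * Real.exp (-(A1 + A2))
          + (EM ^ ((1:ℝ)/3)) ^ β * Real.exp (-(A1 + A2))
          + N ^ β * Real.exp (-(A1 + A2))
          + EU ^ β * Real.exp (-(A1 + A2))) := by ring
    _ ≤ ((d:ℝ)+1) ^ β * (R ^ β + R ^ β + R ^ β + R ^ β + R ^ β) := by
        apply mul_le_mul_of_nonneg_left _ (by positivity)
        linarith
    _ = 5 * ((d:ℝ)+1) ^ β * R ^ β := by ring
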